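/- arXiv:2105.01963 — 7 statements merged into one kernel-verified Lean document; each statement's English description precedes it below -/
import Mathlib

section
/- Let f : {0,1}^n → {0,1} be a Boolean function with Möbius support S_f = {S : f̃(S) ≠ 0}. For any two distinct sets S, T ∈ S_f with S ∪ T ∉ S_f, there exist U, V ∈ S_f with {U,V} ≠ {S,T} and U ∪ V = S ∪ T. -/
/-!
Since `f` takes values in `{0,1}`, `f = f²`. Multiplying Möbius expansions uses
`AND_U · AND_V = AND_{U ∪ V}`, so by uniqueness of the expansion the coefficients satisfy
`f̃(W) = ∑_{U ∪ V = W} f̃(U) f̃(V)`. At `W = S ∪ T` the left side vanishes, while if `(S, T)` and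
`(T, S)` were the only pairs of support sets with union `W`, the right side would be
`2 f̃(S) f̃(T) ≠ 0`.
-/

/-- `AND_S(x) = ∏_{i ∈ S} x_i` as a real number. -/
def andR {n : ℕ} (S : Finset (Fin n)) (x : Fin n → Bool) : ℝ :=
  ∏ i ∈ S, (if x i then (1 : ℝ) else 0)

open Finset

lemma andR_eq_ite {n : ℕ} (S : Finset (Fin n)) (x : Fin n → Bool) :
    andR S x = if ∀ i ∈ S, x i then 1 else 0 := by
  rw [andR, prod_boole]
  congr

lemma andR_mul {n : ℕ} (U V : Finset (Fin n)) (x : Fin n → Bool) :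
    andR U x * andR V x = andR (U ∪ V) x := by
  simp only [andR_eq_ite, forall_mem_union, ite_zero_mul_ite_zero, one_mul]

lemma andR_indicator {n : ℕ} (A B : Finset (Fin n)) :
    andR B (fun i => decide (i ∈ A)) = if B ⊆ A then 1 else 0 := by
  simp only [andR_eq_ite, decide_eq_true_eq, subset_iff]

lemma eq_zero_of_forall_sum_powerset_eq_zero {α M : Type*} [DecidableEq α] [AddCommGroup M]
    (d : Finset α → M) (h : ∀ A : Finset α, ∑ B ∈ A.powerset, d B = 0) : d = 0 := by
  funext A
  induction A using Finset.strongInduction with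
  | _ A ih =>
    have hproper : ∑ B ∈ A.powerset.erase A, d B = 0 :=
      sum_eq_zero fun B hB => by
        rw [mem_erase, mem_powerset] at hB
        exact ih B (lt_of_le_of_ne hB.2 hB.1)
    simpa [← add_sum_erase _ _ (mem_powerset_self A), hproper] using h A

lemma eq_of_forall_sum_mul_andR_eq {n : ℕ} {c d : Finset (Fin n) → ℝ}
    (h : ∀ x, ∑ S, c S * andR S x = ∑ S, d S * andR S x) : c = d := by
  rw [← sub_eq_zero]
  refine eq_zero_of_forall_sum_powerset_eq_zero _ fun A => ?_
  calc ∑ B ∈ A.powerset, (c - d) B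
      = ∑ B, (c B - d B) * andR B (fun i => decide (i ∈ A)) := by
        simp only [andR_indicator, mul_ite, mul_one, mul_zero, ← sum_filter, Pi.sub_apply]
        exact sum_congr (by ext; simp) fun _ _ => rfl
    _ = 0 := by simp only [sub_mul, sum_sub_distrib, h, sub_self]

/-- The coefficients of the product of two Möbius expansions. -/
def unionConv {α R : Type*} [Fintype α] [DecidableEq α] [Semiring R]
    (c d : Finset α → R) (W : Finset α) : R :=
  ∑ p ∈ univ.filter (fun p : Finset α × Finset α => p.1 ∪ p.2 = W), c p.1 * d p.2

lemma sum_unionConv_mul_andR {n : ℕ} (c d : Finset (Fin n) → ℝ) (x : Fin n → Bool) :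
    ∑ W, unionConv c d W * andR W x = (∑ S, c S * andR S x) * ∑ S, d S * andR S x := by
  calc ∑ W, unionConv c d W * andR W x
      = ∑ W, ∑ p ∈ univ.filter (fun p : Finset (Fin n) × Finset (Fin n) => p.1 ∪ p.2 = W),
          c p.1 * d p.2 * andR (p.1 ∪ p.2) x := by
        refine sum_congr rfl fun W _ => ?_
        rw [unionConv, sum_mul]
        exact sum_congr rfl fun p hp => by rw [(mem_filter.1 hp).2]
    _ = ∑ p : Finset (Fin n) × Finset (Fin n), c p.1 * d p.2 * andR (p.1 ∪ p.2) x :=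
        sum_fiberwise _ _ _
    _ = (∑ S, c S * andR S x) * ∑ S, d S * andR S x := by
        rw [sum_mul_sum, ← univ_product_univ, sum_product]
        exact sum_congr rfl fun U _ => sum_congr rfl fun V _ => by rw [← andR_mul]; ring

lemma unionConv_self_eq_of_boolean {n : ℕ} (f : (Fin n → Bool) → Bool)
    (c : Finset (Fin n) → ℝ)
    (hf : ∀ x, (if f x then (1 : ℝ) else 0) = ∑ S : Finset (Fin n), c S * andR S x) :
    unionConv c c = c := by
  refine eq_of_forall_sum_mul_andR_eq fun x => ?_
  rw [sum_unionConv_mul_andR, ← hf x]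
  split_ifs <;> norm_num

lemma Finset.eq_or_eq_swap_of_pair_eq_pair {α : Type*} [DecidableEq α] {a b c d : α}
    (h : ({a, b} : Finset α) = {c, d}) : a = c ∧ b = d ∨ a = d ∧ b = c := by
  rw [← coe_inj, coe_pair, coe_pair] at h
  exact Set.pair_eq_pair_iff.1 h

lemma exists_pair_union_eq_of_unionConv_eq_zero {α : Type*} [Fintype α] [DecidableEq α]
    (c : Finset α → ℝ) {S T : Finset α} (hST : S ≠ T) (hS : c S ≠ 0) (hT : c T ≠ 0)
    (hzero : unionConv c c (S ∪ T) = 0) :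
    ∃ U V : Finset α, c U ≠ 0 ∧ c V ≠ 0 ∧ ({U, V} : Finset (Finset α)) ≠ {S, T} ∧
      U ∪ V = S ∪ T := by
  by_contra! honly
  have hpairs : unionConv c c (S ∪ T) = c S * c T + c T * c S := by
    refine sum_eq_add_of_mem (S, T) (T, S) (by simp) (by simp [union_comm])
      (by simp [hST]) fun p hp hne => ?_
    by_contra hprod
    obtain ⟨hp1, hp2⟩ := mul_ne_zero_iff.1 hprod
    have hpair : ({p.1, p.2} : Finset (Finset α)) = {S, T} :=
      not_not.1 fun h => honly p.1 p.2 hp1 hp2 h (mem_filter.1 hp).2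
    rcases eq_or_eq_swap_of_pair_eq_pair hpair with h | h
    · exact hne.1 (Prod.ext h.1 h.2)
    · exact hne.2 (Prod.ext h.1 h.2)
  have : c S * c T = 0 := by linarith [mul_comm (c S) (c T)]
  exact mul_ne_zero hS hT this

/-- If `S, T` are distinct sets in the Möbius support of a Boolean function `f` with
`S ∪ T` not in the support, then there are `U, V` in the support with `{U,V} ≠ {S,T}`
and `U ∪ V = S ∪ T`. -/
theorem stmt2 (n : ℕ) (f : (Fin n → Bool) → Bool) (c : Finset (Fin n) → ℝ)
    (hf : ∀ x, (if f x then (1 : ℝ) else 0) = ∑ S : Finset (Fin n), c S * andR S x)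
    (S T : Finset (Fin n)) (hST : S ≠ T) (hS : c S ≠ 0) (hT : c T ≠ 0)
    (hUnion : c (S ∪ T) = 0) :
    ∃ U V : Finset (Fin n), c U ≠ 0 ∧ c V ≠ 0 ∧
      ({U, V} : Finset (Finset (Fin n))) ≠ {S, T} ∧ U ∪ V = S ∪ T := by
  refine exists_pair_union_eq_of_unionConv_eq_zero c hST hS hT ?_
  rw [unionConv_self_eq_of_boolean f c hf]
  exact hUnion
end

section
/- The non-adaptive AND decision tree complexity of OMB_n equals n. That is, the minimum size of a family S_1, ..., S_k ⊆ [n] such that the values AND_{S_1}(x), ..., AND_{S_k}(x) determine OMB_n(x) for all x ∈ {0,1}^n is exactly n. -/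
/-!
Singletons read off the whole input, so `n` sets suffice. Conversely, the inputs that are `1`
exactly at the positions `≥ i`, resp. `≥ i + 1`, have OMB values of different parity, and `AND_S`
tells them apart only if `i` is the least element of `S`. Hence in a basis every position is the
least element of some set, and distinct positions need distinct sets.
-/

/-- `AND_S(x)` as a Boolean. -/
def andB {n : ℕ} (S : Finset (Fin n)) (x : Fin n → Bool) : Bool :=
  decide (∀ i ∈ S, x i = true)

/-- `𝒮` is an NAADT basis for `f` if the values `AND_S(x)`, `S ∈ 𝒮`, determine `f(x)`. -/
def IsNAADTBasis {n : ℕ} (f : (Fin n → Bool) → Bool) (𝒮 : Finset (Finset (Fin n))) : Prop :=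
  ∀ x y : Fin n → Bool, (∀ S ∈ 𝒮, andB S x = andB S y) → f x = f y

/-- The Odd-Max-Bit function. -/
def OMB (n : ℕ) (x : Fin n → Bool) : Bool :=
  decide (∃ i : Fin n, x i = false ∧ (i.val + 1) % 2 = 1 ∧ ∀ j : Fin n, i < j → x j = true)

open Finset

def thresholdInput (n i : ℕ) : Fin n → Bool := fun j => decide (i ≤ j.val)

lemma andB_thresholdInput {n : ℕ} (S : Finset (Fin n)) (i : ℕ) :
    andB S (thresholdInput n i) = decide (∀ j ∈ S, i ≤ j.val) := by
  simp [andB, thresholdInput]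

lemma andB_thresholdInput_succ_of_not_isLeast {n : ℕ} {S : Finset (Fin n)} {i : Fin n}
    (h : ¬ IsLeast (S : Set (Fin n)) i) :
    andB S (thresholdInput n i) = andB S (thresholdInput n (i.val + 1)) := by
  rw [andB_thresholdInput, andB_thresholdInput, decide_eq_decide]
  refine ⟨fun hle j hj => ?_, fun hlt j hj => Nat.le_of_succ_le (hlt j hj)⟩
  rcases (hle j hj).eq_or_lt with hij | hij
  · obtain rfl : i = j := Fin.ext hij
    exact absurd ⟨hj, fun k hk => Fin.le_def.mpr (hle k hk)⟩ h
  · exact hij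

lemma OMB_thresholdInput {n i : ℕ} (hi : i ≤ n) :
    OMB n (thresholdInput n i) = decide (i % 2 = 1) := by
  simp only [OMB, thresholdInput, decide_eq_decide, decide_eq_false_iff_not, not_le,
    decide_eq_true_eq]
  constructor
  · rintro ⟨k, hki, hk_odd, hk_last⟩
    have hk_succ : k.val + 1 = i := by
      by_contra hne
      have : i ≤ k.val + 1 := hk_last ⟨k.val + 1, by omega⟩ (Fin.lt_def.mpr (Nat.lt_succ_self _))
      omega
    omega
  · intro hi_odd
    exact ⟨⟨i - 1, by omega⟩, by simp only; omega, by simp only; omega,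
      fun j hj => by rw [Fin.lt_def] at hj; simp only at hj; omega⟩

lemma IsNAADTBasis.exists_isLeast {n : ℕ} {f : (Fin n → Bool) → Bool}
    {𝒮 : Finset (Finset (Fin n))} (h𝒮 : IsNAADTBasis f 𝒮) {i : Fin n}
    (hf : f (thresholdInput n i) ≠ f (thresholdInput n (i.val + 1))) :
    ∃ S ∈ 𝒮, IsLeast (S : Set (Fin n)) i := by
  by_contra! hnone
  exact hf (h𝒮 _ _ fun S hS => andB_thresholdInput_succ_of_not_isLeast (hnone S hS))

lemma card_le_card_of_forall_isLeast {α : Type*} [Fintype α] [PartialOrder α]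
    {𝒮 : Finset (Finset α)} (h : ∀ a : α, ∃ S ∈ 𝒮, IsLeast (S : Set α) a) :
    Fintype.card α ≤ 𝒮.card := by
  choose S hS𝒮 hS using h
  calc Fintype.card α = (univ : Finset α).card := card_univ.symm
    _ ≤ 𝒮.card := card_le_card_of_injOn S (fun a _ => hS𝒮 a)
        fun a _ b _ hab => (hS a).unique (hab ▸ hS b)

lemma isNAADTBasis_singletons {n : ℕ} (f : (Fin n → Bool) → Bool) :
    IsNAADTBasis f (univ.image singleton) := by
  intro x y hxy
  congr 1
  funext i
  simpa [andB] using hxy {i} (mem_image_of_mem _ (mem_univ i))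

theorem stmt6_general (n : ℕ) :
    (∃ 𝒮 : Finset (Finset (Fin n)), IsNAADTBasis (OMB n) 𝒮 ∧ 𝒮.card = n) ∧
    (∀ 𝒮 : Finset (Finset (Fin n)), IsNAADTBasis (OMB n) 𝒮 → n ≤ 𝒮.card) := by
  refine ⟨⟨univ.image singleton, isNAADTBasis_singletons _, ?_⟩, fun 𝒮 h𝒮 => ?_⟩
  · rw [card_image_of_injective _ singleton_injective, card_univ, Fintype.card_fin]
  · have hOMB (i : Fin n) : OMB n (thresholdInput n i) ≠ OMB n (thresholdInput n (i.val + 1)) := by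
      rw [OMB_thresholdInput i.isLt.le, OMB_thresholdInput i.isLt, Ne, decide_eq_decide]
      omega
    simpa using card_le_card_of_forall_isLeast fun i => h𝒮.exists_isLeast (hOMB i)

/-- The non-adaptive AND decision tree complexity of `OMB_n` is exactly `n`. -/
theorem stmt6 (n : ℕ) (hn : 0 < n) :
    (∃ 𝒮 : Finset (Finset (Fin n)), IsNAADTBasis (OMB n) 𝒮 ∧ 𝒮.card = n) ∧
    (∀ 𝒮 : Finset (Finset (Fin n)), IsNAADTBasis (OMB n) 𝒮 → n ≤ 𝒮.card) :=
  stmt6_general n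
end

section
/- The Möbius pattern complexity of OMB_n is exactly n+1: the only patterns attainable over the Möbius support of OMB_n (excluding the empty set) are the strings 1^i 0^{n-i} for i ∈ {0,1,...,n}, each attained by input 0^{n-i}1^i. -/
/-- The pattern of `x` on the Möbius support of `OMB_n` (excluding `∅`): the `j`-th entry
is the evaluation of the suffix monomial `AND_{{j,…,n}}` on `x`. -/
def ombPattern (n : ℕ) (x : Fin n → Bool) : Fin n → Bool :=
  fun j => andB (Finset.univ.filter fun i : Fin n => (j : ℕ) ≤ i.val) x

def onesSuffix (n i : ℕ) : Fin n → Bool :=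
  fun j => decide (n - i ≤ (j : ℕ))

section Pattern

variable {n : ℕ}

theorem ombPattern_eq_true_iff (x : Fin n → Bool) (j : Fin n) :
    ombPattern n x j = true ↔ ∀ i, j ≤ i → x i = true := by
  simp only [ombPattern, andB, decide_eq_true_eq, Finset.mem_filter, Finset.mem_univ, true_and,
    Fin.le_def]

theorem monotone_ombPattern (x : Fin n → Bool) : Monotone (ombPattern n x) := by
  intro j k hjk
  rw [Bool.le_iff_imp]
  simp only [ombPattern_eq_true_iff]
  exact fun h i hki => h i (hjk.trans hki)

theorem ombPattern_eq_self_of_monotone {x : Fin n → Bool} (hx : Monotone x) :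
    ombPattern n x = x := by
  funext j
  rw [Bool.eq_iff_iff, ombPattern_eq_true_iff]
  exact ⟨fun h => h j le_rfl, fun h i hji => Bool.le_iff_imp.mp (hx hji) h⟩

theorem range_ombPattern : Set.range (ombPattern n) = {p | Monotone p} :=
  Set.ext fun p => ⟨by rintro ⟨x, rfl⟩; exact monotone_ombPattern x,
    fun hp => ⟨p, ombPattern_eq_self_of_monotone hp⟩⟩

end Pattern

section OnesSuffix

variable {n : ℕ}

theorem monotone_onesSuffix (i : ℕ) : Monotone (onesSuffix n i) := by
  intro j k hjk
  rw [Bool.le_iff_imp]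
  simp only [onesSuffix, decide_eq_true_eq]
  exact fun h => h.trans (Fin.le_def.mp hjk)

/-- The threshold is the least `t` beyond which `p` is constantly true. -/
theorem exists_onesSuffix_eq_of_monotone {p : Fin n → Bool} (hp : Monotone p) :
    ∃ i ≤ n, onesSuffix n i = p := by
  have hex : ∃ t, ∀ j : Fin n, t ≤ (j : ℕ) → p j = true :=
    ⟨n, fun j hj => absurd j.isLt (by omega)⟩
  have htn : Nat.find hex ≤ n := Nat.find_min' hex fun j hj => absurd j.isLt (by omega)
  refine ⟨n - Nat.find hex, Nat.sub_le _ _, funext fun j => ?_⟩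
  rw [onesSuffix, Nat.sub_sub_self htn, Bool.eq_iff_iff, decide_eq_true_iff]
  refine ⟨Nat.find_spec hex j, fun hj => Nat.find_min' hex fun k hjk => ?_⟩
  exact Bool.le_iff_imp.mp (hp (Fin.le_def.mpr hjk)) hj

theorem onesSuffix_injOn : Set.InjOn (onesSuffix n) (Set.Iic n) := by
  intro a ha b hb heq
  by_contra hne
  wlog hab : a < b generalizing a b
  · exact this hb ha heq.symm (Ne.symm hne) (by omega)
  rw [Set.mem_Iic] at hb
  have := congrFun heq ⟨n - b, by omega⟩
  simp only [onesSuffix, decide_eq_decide] at this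
  omega

end OnesSuffix

theorem stmt7_general (n : ℕ) :
    Finset.univ.image (ombPattern n) =
      (Finset.range (n + 1)).image (fun i => fun j : Fin n => decide (n - i ≤ (j : ℕ))) ∧
    (Finset.univ.image (ombPattern n)).card = n + 1 := by
  have hpatterns :
      Finset.univ.image (ombPattern n) = (Finset.range (n + 1)).image (onesSuffix n) := by
    ext p
    have hp := Set.ext_iff.mp range_ombPattern p
    simp only [Set.mem_range, Finset.mem_image, Finset.mem_univ, true_and,
      Set.mem_ofPred_eq, Finset.mem_range, Nat.lt_succ_iff] at hp ⊢
    rw [hp]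
    exact ⟨exists_onesSuffix_eq_of_monotone, by rintro ⟨i, -, rfl⟩; exact monotone_onesSuffix i⟩
  refine ⟨hpatterns, ?_⟩
  rw [hpatterns, Finset.card_image_of_injOn, Finset.card_range]
  intro a ha b hb
  exact onesSuffix_injOn (by simpa [Nat.lt_succ_iff] using ha) (by simpa [Nat.lt_succ_iff] using hb)

/-- The Möbius pattern complexity of `OMB_n` is exactly `n+1`: the attainable patterns are
precisely the strings `1^i 0^{n-i}` for `0 ≤ i ≤ n` (pattern `1^i 0^{n-i}` being attained by
the input `0^{n-i} 1^i`). -/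
theorem stmt7 (n : ℕ) (hn : 0 < n) :
    Finset.univ.image (ombPattern n) =
      (Finset.range (n + 1)).image (fun i => fun j : Fin n => decide (n - i ≤ (j : ℕ))) ∧
    (Finset.univ.image (ombPattern n)).card = n + 1 :=
  stmt7_general n
end

section
/- Let n ≥ 3, q ≥ 1, and 1 ≤ d ≤ n. Suppose X ⊆ [q]^n is such that every two (not necessarily distinct) elements x, x' ∈ X agree in at least d coordinates, and suppose q > (e·n/d)². Then |X| < q^{n - d/4}. -/
/-!
Fix `x₀ ∈ X`. Every `x ∈ X` agrees with `x₀` on some `d`-set `P` of coordinates and is then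
determined by its values off `P`, so `|X| ≤ C(n,d) q^(n-d) ≤ (en/d)^d q^(n-d)`. Since
`(en/d)² < q`, this is less than `q^(d/2) q^(n-d) = q^(n-d/2) ≤ q^(n-d/4)`.
-/

open Finset Fintype

section Agreement

variable {ι α : Type*} [Fintype ι] [DecidableEq ι] [Fintype α] [DecidableEq α]

lemma card_filter_eqOn_le (x₀ : ι → α) (P : Finset ι) :
    #{x : ι → α | ∀ i ∈ P, x i = x₀ i} ≤ card α ^ (card ι - #P) := by
  calc #{x : ι → α | ∀ i ∈ P, x i = x₀ i}
      ≤ #(univ : Finset (↥Pᶜ → α)) := by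
        refine card_le_card_of_injOn (fun x i ↦ x i) (fun _ _ ↦ mem_univ _) ?_
        intro x hx y hy hxy
        simp only [coe_filter, Set.mem_ofPred_eq, mem_univ, true_and] at hx hy
        funext i
        by_cases hi : i ∈ P
        · rw [hx i hi, hy i hi]
        · exact congrFun hxy ⟨i, mem_compl.2 hi⟩
    _ = card α ^ (card ι - #P) := by
        rw [card_univ, card_fun, card_coe, card_compl]

lemma card_le_choose_mul_pow_of_agree_with (x₀ : ι → α) {X : Finset (ι → α)} {d : ℕ}
    (hX : ∀ x ∈ X, d ≤ #{i | x i = x₀ i}) :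
    #X ≤ (card ι).choose d * card α ^ (card ι - d) := by
  have hcover : X ⊆ (powersetCard d univ).biUnion fun P ↦ {x | ∀ i ∈ P, x i = x₀ i} := by
    intro x hx
    obtain ⟨P, hP, hPcard⟩ := exists_subset_card_eq (hX x hx)
    simp only [mem_biUnion, mem_powersetCard, mem_filter, mem_univ, true_and]
    exact ⟨P, ⟨subset_univ P, hPcard⟩, fun i hi ↦ (mem_filter.1 (hP hi)).2⟩
  calc #X ≤ _ := card_le_card hcover
    _ ≤ #(powersetCard d (univ : Finset ι)) * card α ^ (card ι - d) := by
        refine card_biUnion_le_card_mul _ _ _ fun P hP ↦ ?_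
        rw [← (mem_powersetCard.1 hP).2]
        exact card_filter_eqOn_le x₀ P
    _ = (card ι).choose d * card α ^ (card ι - d) := by rw [card_powersetCard, card_univ]

lemma card_le_choose_mul_pow_of_pairwise_agree {X : Finset (ι → α)} {d : ℕ}
    (hX : ∀ x ∈ X, ∀ x' ∈ X, d ≤ #{i | x i = x' i}) :
    #X ≤ (card ι).choose d * card α ^ (card ι - d) := by
  obtain rfl | ⟨x₀, hx₀⟩ := X.eq_empty_or_nonempty
  · simp
  · exact card_le_choose_mul_pow_of_agree_with x₀ fun x hx ↦ hX x hx x₀ hx₀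

end Agreement

lemma Nat.choose_le_exp_mul_div_pow (n : ℕ) {d : ℕ} (hd : d ≠ 0) :
    (n.choose d : ℝ) ≤ (Real.exp 1 * n / d) ^ d := by
  have hd₀ : (0 : ℝ) < d := by positivity
  have hfact : (d : ℝ) ^ d ≤ Real.exp d * d.factorial := by
    have := Real.pow_div_factorial_le_exp (d : ℝ) hd₀.le d
    rwa [div_le_iff₀ (by positivity)] at this
  calc (n.choose d : ℝ) ≤ n ^ d / d.factorial := Nat.choose_le_pow_div d n
    _ ≤ Real.exp d * n ^ d / d ^ d := by
        rw [div_le_div_iff₀ (by positivity) (by positivity)]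
        nlinarith [pow_nonneg (Nat.cast_nonneg (α := ℝ) n) d]
    _ = (Real.exp 1 * n / d) ^ d := by rw [div_pow, mul_pow, Real.exp_one_pow]

lemma pow_lt_rpow_half_of_sq_lt {a q : ℝ} (ha : 0 ≤ a) (h : a ^ 2 < q) {d : ℕ} (hd : d ≠ 0) :
    a ^ d < q ^ ((d : ℝ) / 2) := by
  calc a ^ d = (a ^ 2) ^ ((d : ℝ) / 2) := by
        rw [← Real.rpow_natCast_mul ha, Nat.cast_ofNat, mul_div_cancel₀ _ two_ne_zero,
          Real.rpow_natCast]
    _ < q ^ ((d : ℝ) / 2) := by gcongr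

theorem stmt11_general (n q d : ℕ) (hd1 : 1 ≤ d) (hdn : d ≤ n)
    (X : Finset (Fin n → Fin q))
    (hagree : ∀ x ∈ X, ∀ x' ∈ X,
      d ≤ (Finset.univ.filter fun i : Fin n => x i = x' i).card)
    (hq2 : (Real.exp 1 * (n : ℝ) / (d : ℝ)) ^ 2 < (q : ℝ)) :
    (X.card : ℝ) < (q : ℝ) ^ ((n : ℝ) - (d : ℝ) / 4) := by
  have hd : d ≠ 0 := by omega
  have hA : 0 ≤ Real.exp 1 * n / d := by positivity
  have hq : 0 < q := by exact_mod_cast (sq_nonneg _).trans_lt hq2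
  have hcount : (#X : ℝ) ≤ n.choose d * (q : ℝ) ^ ((n : ℝ) - d) := by
    have := card_le_choose_mul_pow_of_pairwise_agree hagree
    rw [Fintype.card_fin, Fintype.card_fin] at this
    rw [← Nat.cast_sub hdn, Real.rpow_natCast]
    exact_mod_cast this
  calc (#X : ℝ) ≤ n.choose d * (q : ℝ) ^ ((n : ℝ) - d) := hcount
    _ ≤ (Real.exp 1 * n / d) ^ d * (q : ℝ) ^ ((n : ℝ) - d) := by
        gcongr; exact Nat.choose_le_exp_mul_div_pow n hd
    _ < (q : ℝ) ^ ((d : ℝ) / 2) * (q : ℝ) ^ ((n : ℝ) - d) := by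
        gcongr; exact pow_lt_rpow_half_of_sq_lt hA hq2 hd
    _ = (q : ℝ) ^ ((n : ℝ) - d / 2) := by
        rw [← Real.rpow_add (by positivity)]; ring_nf
    _ ≤ (q : ℝ) ^ ((n : ℝ) - d / 4) :=
        Real.rpow_le_rpow_of_exponent_le (by exact_mod_cast hq)
          (by linarith [d.cast_nonneg (α := ℝ)])

/-- If every two elements of `X ⊆ [q]^n` agree in at least `d` coordinates and
`q > (e·n/d)²`, then `|X| < q^{n - d/4}`. -/
theorem stmt11 (n q d : ℕ) (hn : 3 ≤ n) (hq : 1 ≤ q) (hd1 : 1 ≤ d) (hdn : d ≤ n)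
    (X : Finset (Fin n → Fin q))
    (hagree : ∀ x ∈ X, ∀ x' ∈ X,
      d ≤ (Finset.univ.filter fun i : Fin n => x i = x' i).card)
    (hq2 : (Real.exp 1 * (n : ℝ) / (d : ℝ)) ^ 2 < (q : ℝ)) :
    (X.card : ℝ) < (q : ℝ) ^ ((n : ℝ) - (d : ℝ) / 4) :=
  stmt11_general n q d hd1 hdn X hagree hq2
end

section
/- Let n be a positive integer and 1 ≤ k < n/2 an integer. Then there exists a collection X of at most C·(log₂ C(n,k))² subsets of [n] (for some absolute constant C) with the property that for all distinct indices i_1, ..., i_{k+1} ∈ [n] and every j ∈ [k+1], some X ∈ X contains i_j and contains none of the i_ℓ for ℓ ≠ j. -/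
/-!
Colour `[n]` uniformly at random with `2k` colours and let `X` be the colour class `0`. A fixed
point `a` lands in `X` while a fixed `k`-set `T ∌ a` avoids it with probability
`(1/2k)(1 - 1/2k)^k ≥ 1/4k`. Among `(4k - 1)s` independent colourings, all fail for a given
`(a, T)` with probability at most `(1 - 1/4k)^{(4k-1)s} ≤ 2^{-s}`, so once `2^s > n·C(n,k)`
the union bound leaves a family of colourings that works for every pair. Since
`k ≤ log₂ C(n,k)` and `n ≤ C(n,k)`, one may take `s ≤ 3 log₂ C(n,k)`.
-/

open Finset

lemma Nat.choose_le_choose_of_le_of_le_half {n i j : ℕ} (hij : i ≤ j) (hj : j ≤ n / 2) :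
    n.choose i ≤ n.choose j := by
  induction j, hij using Nat.le_induction with
  | base => rfl
  | succ j _ ih => exact (ih (by omega)).trans (Nat.choose_le_succ_of_lt_half_left (by omega))

lemma Nat.two_pow_le_choose {n k : ℕ} (h : 2 * k < n) : 2 ^ k ≤ n.choose k := by
  induction k generalizing n with
  | zero => simp
  | succ k ih =>
    obtain ⟨n, rfl⟩ : ∃ m, n = m + 1 := ⟨n - 1, by omega⟩
    have hmono : n.choose k ≤ n.choose (k + 1) := Nat.choose_le_succ_of_lt_half_left (by omega)
    rw [Nat.choose_succ_succ, pow_succ]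
    linarith [ih (n := n) (by omega)]

lemma two_mul_pow_self_le_succ_pow {r : ℕ} (hr : r ≠ 0) : 2 * r ^ r ≤ (r + 1) ^ r := by
  have := pow_add_mul_le_add_pow (a := r) (b := 1) (Nat.zero_le _) (Nat.zero_le _) r
  rwa [mul_one, Nat.cast_id, mul_pow_sub_one hr, ← two_mul] at this

lemma succ_pow_le_two_mul_pow {m k : ℕ} (h : 2 * k ≤ m + 1) : (m + 1) ^ k ≤ 2 * m ^ k := by
  rcases Nat.eq_zero_or_pos k with rfl | hk
  · simp
  have bernoulli := pow_add_mul_le_add_pow (a := ((m + 1 : ℕ) : ℤ)) (b := -1) (by positivity)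
    (by push_cast; linarith) k
  have hsplit : (((m + 1 : ℕ) : ℤ)) ^ k = (m + 1 : ℕ) * (m + 1 : ℕ) ^ (k - 1) := by
    rw [mul_pow_sub_one hk.ne']
  have hfactor : (2 * k : ℤ) * (m + 1 : ℕ) ^ (k - 1) ≤ (m + 1 : ℕ) * (m + 1 : ℕ) ^ (k - 1) :=
    mul_le_mul_of_nonneg_right (by exact_mod_cast h) (by positivity)
  have : (((m + 1) ^ k : ℕ) : ℤ) ≤ ((2 * m ^ k : ℕ) : ℤ) := by
    push_cast at bernoulli hsplit hfactor ⊢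
    simp only [add_neg_cancel_right] at bernoulli
    nlinarith
  exact_mod_cast this

lemma mul_pow_lt_pow_of_succ_mul_le {p A b r s : ℕ} (hA : 0 < A) (hr : r ≠ 0)
    (hb : (r + 1) * b ≤ r * A) (hp : p < 2 ^ s) : p * b ^ (r * s) < A ^ (r * s) := by
  have hgrowth : 2 ^ s * r ^ (r * s) ≤ (r + 1) ^ (r * s) := by
    rw [pow_mul, pow_mul, ← mul_pow]
    exact Nat.pow_le_pow_left (two_mul_pow_self_le_succ_pow hr) s
  refine lt_of_mul_lt_mul_left (a := (r + 1) ^ (r * s)) ?_ (Nat.zero_le _)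
  calc (r + 1) ^ (r * s) * (p * b ^ (r * s)) = p * ((r + 1) * b) ^ (r * s) := by
        rw [mul_pow]; ring
    _ ≤ p * (r * A) ^ (r * s) := by gcongr
    _ = p * r ^ (r * s) * A ^ (r * s) := by ring
    _ < 2 ^ s * r ^ (r * s) * A ^ (r * s) := by gcongr
    _ ≤ (r + 1) ^ (r * s) * A ^ (r * s) := by gcongr

lemma exists_forall_exists_notMem_of_card_mul_pow_lt {Ω ι : Type*} [Fintype Ω] [DecidableEq Ω]
    (P : Finset ι) (B : ι → Finset Ω) {b w : ℕ} (hB : ∀ p ∈ P, #(B p) ≤ b)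
    (h : #P * b ^ w < Fintype.card Ω ^ w) : ∃ f : Fin w → Ω, ∀ p ∈ P, ∃ t, f t ∉ B p := by
  by_contra! hbad
  have hcover : (univ : Finset (Fin w → Ω)) ⊆ P.biUnion fun p ↦ Fintype.piFinset fun _ ↦ B p :=
    fun f _ ↦ by
      obtain ⟨p, hp, hf⟩ := hbad f
      exact mem_biUnion.2 ⟨p, hp, Fintype.mem_piFinset.2 hf⟩
  have : Fintype.card Ω ^ w ≤ #P * b ^ w :=
    calc Fintype.card Ω ^ w = #(univ : Finset (Fin w → Ω)) := by simp
      _ ≤ _ := card_le_card hcover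
      _ ≤ ∑ p ∈ P, #(Fintype.piFinset fun _ : Fin w ↦ B p) := card_biUnion_le
      _ ≤ ∑ _p ∈ P, b ^ w := sum_le_sum fun p hp ↦ by
        rw [Fintype.card_piFinset, prod_const, card_univ, Fintype.card_fin]
        exact Nat.pow_le_pow_left (hB p hp) w
      _ = #P * b ^ w := by rw [sum_const, smul_eq_mul]
  omega

section Coloring

variable {α : Type*} [Fintype α] [DecidableEq α]

lemma card_coloring_zero_at_nonzero_on (m : ℕ) {a : α} {T : Finset α} (ha : a ∉ T) :
    #{f : α → Fin (m + 1) | f a = 0 ∧ ∀ x ∈ T, f x ≠ 0} =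
      m ^ #T * (m + 1) ^ (Fintype.card α - #T - 1) := by
  set S : α → Finset (Fin (m + 1)) := fun x ↦ if x = a then {0} else if x ∈ T then {0}ᶜ else univ
  have hS : ({f : α → Fin (m + 1) | f a = 0 ∧ ∀ x ∈ T, f x ≠ 0} : Finset _) =
      Fintype.piFinset S := by
    ext f
    simp only [mem_filter, mem_univ, true_and, Fintype.mem_piFinset, S]
    constructor
    · rintro ⟨hfa, hfT⟩ x
      split_ifs with hxa hxT
      · simpa [hxa]
      · simpa using hfT x hxT
      · exact mem_univ _
    · intro hf
      refine ⟨by simpa using hf a, fun x hx ↦ ?_⟩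
      have hxa : x ≠ a := ne_of_mem_of_not_mem hx ha
      simpa [hxa, hx] using hf x
  have hT : ∏ x ∈ T, #(S x) = m ^ #T := by
    rw [prod_congr rfl fun x hx ↦ ?_, prod_const]
    simp [S, ne_of_mem_of_not_mem hx ha, hx, card_compl]
  have hrest : ∏ x ∈ (insert a T)ᶜ, #(S x) = (m + 1) ^ (Fintype.card α - #T - 1) := by
    rw [prod_congr rfl fun x hx ↦ ?_, prod_const, card_compl, card_insert_of_notMem ha,
      Nat.sub_sub]
    rw [mem_compl, mem_insert, not_or] at hx
    simp [S, hx.1, hx.2]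
  rw [hS, Fintype.card_piFinset, ← prod_mul_prod_compl (insert a T), prod_insert ha, hT, hrest]
  simp [S]

lemma two_mul_succ_mul_card_compl_coloring_le {m : ℕ} {a : α} {T : Finset α} (ha : a ∉ T)
    (hm : 2 * #T ≤ m + 1) :
    (2 * m + 2) * #({f : α → Fin (m + 1) | f a = 0 ∧ ∀ x ∈ T, f x ≠ 0} : Finset _)ᶜ ≤
      (2 * m + 1) * (m + 1) ^ Fintype.card α := by
  set n := Fintype.card α
  have hTn : #T + 1 ≤ n := by
    simpa [card_insert_of_notMem ha] using card_le_univ (insert a T)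
  have htotal : (m + 1) ^ n ≤ (2 * m + 2) * (m ^ #T * (m + 1) ^ (n - #T - 1)) :=
    calc (m + 1) ^ n = (m + 1) * (m + 1) ^ #T * (m + 1) ^ (n - #T - 1) := by
          rw [← pow_succ', ← pow_add]; congr 1; omega
      _ ≤ (m + 1) * (2 * m ^ #T) * (m + 1) ^ (n - #T - 1) := by
          gcongr; exact succ_pow_le_two_mul_pow hm
      _ = _ := by ring
  rw [card_compl, card_coloring_zero_at_nonzero_on m ha, Fintype.card_fun, Fintype.card_fin,
    Nat.mul_sub, Nat.sub_le_iff_le_add]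
  linarith

theorem exists_finset_separating {k s : ℕ} (hk : k ≠ 0)
    (hs : Fintype.card α * (Fintype.card α).choose k < 2 ^ s) :
    ∃ 𝒳 : Finset (Finset α), #𝒳 ≤ (4 * k - 1) * s ∧
      ∀ a (T : Finset α), #T = k → a ∉ T → ∃ X ∈ 𝒳, a ∈ X ∧ Disjoint X T := by
  set m := 2 * k - 1
  set r := 2 * m + 1
  set A := (m + 1) ^ Fintype.card α
  let P := ((univ : Finset α) ×ˢ powersetCard k univ).filter fun p ↦ p.1 ∉ p.2
  let good (p : α × Finset α) : Finset (α → Fin (m + 1)) := {f | f p.1 = 0 ∧ ∀ x ∈ p.2, f x ≠ 0}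
  have hP : #P < 2 ^ s := by
    refine lt_of_le_of_lt (card_filter_le _ _) ?_
    simpa [card_powersetCard] using hs
  have hbad : ∀ p ∈ P, #(good p)ᶜ ≤ r * A / (r + 1) := by
    rintro ⟨a, T⟩ hp
    simp only [P, mem_filter, mem_product, mem_powersetCard] at hp
    obtain ⟨⟨-, -, hT⟩, ha⟩ := hp
    rw [Nat.le_div_iff_mul_le (by omega), mul_comm]
    exact two_mul_succ_mul_card_compl_coloring_le ha (show 2 * #T ≤ m + 1 by omega)
  obtain ⟨f, hf⟩ := exists_forall_exists_notMem_of_card_mul_pow_lt P (fun p ↦ (good p)ᶜ) hbad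
    (w := r * s) (mul_pow_lt_pow_of_succ_mul_le (by positivity) (by omega) (by
      rw [Fintype.card_fun, Fintype.card_fin]; exact Nat.mul_div_le (r * A) (r + 1)) hP)
  refine ⟨univ.image fun t ↦ ({x | f t x = 0} : Finset α), ?_, fun a T hT ha ↦ ?_⟩
  · refine card_image_le.trans ?_
    rw [card_univ, Fintype.card_fin]
    gcongr
    omega
  · obtain ⟨t, ht⟩ := hf (a, T) (by simp [P, hT, ha])
    simp only [good, mem_compl, mem_filter, mem_univ, true_and, not_not] at ht
    refine ⟨_, mem_image_of_mem _ (mem_univ t), by simpa using ht.1, ?_⟩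
    exact disjoint_left.2 fun x hx hxT ↦ ht.2 x hxT (by simpa using hx)

end Coloring

lemma natLog_mul_choose_le_two_mul_logb {n k : ℕ} (hk : 1 ≤ k) (h : 2 * k < n) :
    (Nat.log 2 (n * n.choose k) : ℝ) ≤ 2 * Real.logb 2 (n.choose k) := by
  have hn : n ≤ n.choose k := by
    simpa using Nat.choose_le_choose_of_le_of_le_half (n := n) hk (by omega)
  calc (Nat.log 2 (n * n.choose k) : ℝ) ≤ Real.logb 2 (n * n.choose k : ℕ) :=
        Real.natLog_le_logb _ _
    _ ≤ Real.logb 2 ((n.choose k : ℝ) ^ 2) := by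
        gcongr
        · norm_num
        · exact_mod_cast Nat.mul_pos (by omega) (Nat.choose_pos (by omega))
        · push_cast; rw [sq]; gcongr
    _ = 2 * Real.logb 2 (n.choose k) := by rw [Real.logb_pow]; norm_num

/-- There is an absolute constant `C` such that for all `n` and `1 ≤ k < n/2` there is a
family `𝒳` of at most `C·(log₂ C(n,k))²` subsets of `[n]` such that for all distinct
`i₁,…,i_{k+1} ∈ [n]` and every `j`, some `X ∈ 𝒳` contains `i_j` and none of the other
`i_ℓ`. -/
theorem stmt17 :
    ∃ C : ℝ, 0 < C ∧ ∀ n k : ℕ, 1 ≤ k → 2 * k < n →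
      ∃ 𝒳 : Finset (Finset (Fin n)),
        (𝒳.card : ℝ) ≤ C * (Real.logb 2 (n.choose k : ℝ)) ^ 2 ∧
        ∀ i : Fin (k + 1) → Fin n, Function.Injective i →
          ∀ j : Fin (k + 1), ∃ X ∈ 𝒳, i j ∈ X ∧ ∀ l : Fin (k + 1), l ≠ j → i l ∉ X := by
  refine ⟨12, by norm_num, fun n k hk hn ↦ ?_⟩
  set L := Real.logb 2 (n.choose k : ℝ)
  set s := Nat.log 2 (n * n.choose k) + 1
  obtain ⟨𝒳, h𝒳, hsep⟩ := exists_finset_separating (α := Fin n) (k := k) (s := s) (by omega)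
    (by simpa using Nat.lt_pow_succ_log_self one_lt_two (n * n.choose k))
  have hkL : (k : ℝ) ≤ L :=
    le_trans (by exact_mod_cast Nat.le_log_of_pow_le one_lt_two (Nat.two_pow_le_choose hn))
      (Real.natLog_le_logb _ _)
  have hsL : (s : ℝ) ≤ 3 * L := by
    have h1 : (1 : ℝ) ≤ k := by exact_mod_cast hk
    push_cast [s]
    linarith [natLog_mul_choose_le_two_mul_logb hk hn]
  refine ⟨𝒳, ?_, fun i hi j ↦ ?_⟩
  · calc (#𝒳 : ℝ) ≤ ((4 * k - 1) * s : ℕ) := by exact_mod_cast h𝒳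
      _ ≤ (4 * k : ℝ) * s := by exact_mod_cast Nat.mul_le_mul_right s (Nat.sub_le _ _)
      _ ≤ 4 * L * (3 * L) := by gcongr; linarith [k.cast_nonneg (α := ℝ)]
      _ = 12 * L ^ 2 := by ring
  · obtain ⟨X, hX, hjX, hdisj⟩ := hsep (i j) ((univ.erase j).image i)
      (by rw [card_image_of_injective _ hi]; simp) (by simp [hi.eq_iff])
    exact ⟨X, hX, hjX, fun l hl hlX ↦
      disjoint_left.1 hdisj hlX (mem_image_of_mem i (mem_erase.2 ⟨hl, mem_univ l⟩))⟩
end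

section
/- Let f : {0,1}^n → {0,1} be constant on all inputs of Hamming weight less than n−k, for some k < n/2. Suppose there is a family X of subsets of [n] such that for all distinct i_1,...,i_{k+1} ∈ [n] and j ∈ [k+1] some X ∈ X contains i_j and none of the other i_ℓ. Then the map x ↦ (AND_X(x))_{X ∈ X} is injective on the set of strings of Hamming weight at least n−k; consequently (AND_X(x))_{X ∈ X} determines f(x) for all x, i.e., X is an NAADT basis for f. -/
/-- Hamming weight of `x ∈ {0,1}^n`. -/
def wt {n : ℕ} (x : Fin n → Bool) : ℕ :=
  (Finset.univ.filter fun i => x i = true).card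

open Finset

section Separating

variable {α : Type*}

def IsSeparating (𝒳 : Finset (Finset α)) (k : ℕ) : Prop :=
  ∀ i : Fin (k + 1) → α, Function.Injective i →
    ∀ j : Fin (k + 1), ∃ X ∈ 𝒳, i j ∈ X ∧ ∀ l : Fin (k + 1), l ≠ j → i l ∉ X

theorem IsSeparating.exists_mem_disjoint [Fintype α] [DecidableEq α] {𝒳 : Finset (Finset α)}
    {k : ℕ} (hsep : IsSeparating 𝒳 k) (hk : k < Fintype.card α) {S : Finset α} (hS : #S ≤ k)
    {a : α} (ha : a ∉ S) : ∃ X ∈ 𝒳, a ∈ X ∧ Disjoint X S := by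
  obtain ⟨T, hST, hT⟩ := exists_superset_card_eq (s := insert a S) (n := k + 1)
    (by rw [card_insert_of_notMem ha]; omega) hk
  let e : T ≃ Fin (k + 1) := T.equivFinOfCardEq hT
  have hT_mem : ∀ {b}, b ∈ S → b ∈ T := fun hb => hST (mem_insert_of_mem hb)
  obtain ⟨X, hX, haX, hothers⟩ := hsep (fun j => e.symm j)
    (Subtype.val_injective.comp e.symm.injective) (e ⟨a, hST (mem_insert_self a S)⟩)
  refine ⟨X, hX, by simpa using haX, disjoint_left.2 fun b hbX hbS => ?_⟩
  refine hothers (e ⟨b, hT_mem hbS⟩) ?_ (by simpa using hbX)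
  rw [Ne, e.apply_eq_iff_eq, Subtype.mk.injEq]
  exact fun hba => ha (hba ▸ hbS)

end Separating

def zeroSet {α : Type*} [Fintype α] (x : α → Bool) : Finset α :=
  univ.filter fun i => x i = false

@[simp]
theorem mem_zeroSet {α : Type*} [Fintype α] {x : α → Bool} {i : α} :
    i ∈ zeroSet x ↔ x i = false := by
  simp [zeroSet]

theorem zeroSet_injective {α : Type*} [Fintype α] :
    Function.Injective (zeroSet : (α → Bool) → Finset α) := by
  intro x y h
  funext i
  have hi := congrArg (i ∈ ·) h
  simp only [mem_zeroSet, eq_iff_iff] at hi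
  cases hx : x i <;> cases hy : y i <;> simp_all

theorem wt_add_card_zeroSet {n : ℕ} (x : Fin n → Bool) : wt x + #(zeroSet x) = n := by
  simpa [wt, zeroSet] using card_filter_add_card_filter_not (s := univ) (fun i => x i = true)

theorem andB_eq_true_iff {n : ℕ} {X : Finset (Fin n)} {x : Fin n → Bool} :
    andB X x = true ↔ Disjoint X (zeroSet x) := by
  simp [andB, disjoint_left]

theorem eq_of_forall_andB_eq {n k : ℕ} (hk : k < n) {𝒳 : Finset (Finset (Fin n))}
    (hsep : IsSeparating 𝒳 k) {x y : Fin n → Bool} (hxy : wt x ≤ wt y) (hy : n - k ≤ wt y)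
    (h : ∀ X ∈ 𝒳, andB X x = andB X y) : x = y := by
  have hx_card := wt_add_card_zeroSet x
  have hy_card := wt_add_card_zeroSet y
  by_contra hne
  obtain ⟨a, hax, hay⟩ : ∃ a ∈ zeroSet x, a ∉ zeroSet y := by
    by_contra! hsub
    exact hne (zeroSet_injective (eq_of_subset_of_card_le hsub (by omega)))
  obtain ⟨X, hX, haX, hdisj⟩ :=
    hsep.exists_mem_disjoint (by simpa using hk) (S := zeroSet y) (by omega) hay
  have hxX : andB X x ≠ true := fun hx => disjoint_left.1 (andB_eq_true_iff.1 hx) haX hax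
  exact hxX (h X hX ▸ andB_eq_true_iff.2 hdisj)

/-- If `f` is constant on inputs of Hamming weight `< n-k` and `𝒳` is a separating family
as in Statement 17, then `x ↦ (AND_X(x))_{X ∈ 𝒳}` is injective on strings of weight
`≥ n-k`, and consequently `𝒳` is an NAADT basis for `f`. -/
theorem stmt18 (n k : ℕ) (hk : 2 * k < n) (f : (Fin n → Bool) → Bool)
    (hconst : ∀ x y : Fin n → Bool, wt x < n - k → wt y < n - k → f x = f y)
    (𝒳 : Finset (Finset (Fin n)))
    (hsep : ∀ i : Fin (k + 1) → Fin n, Function.Injective i →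
      ∀ j : Fin (k + 1), ∃ X ∈ 𝒳, i j ∈ X ∧ ∀ l : Fin (k + 1), l ≠ j → i l ∉ X) :
    (∀ x y : Fin n → Bool, n - k ≤ wt x → n - k ≤ wt y →
      (∀ X ∈ 𝒳, andB X x = andB X y) → x = y) ∧
    (∀ x y : Fin n → Bool, (∀ X ∈ 𝒳, andB X x = andB X y) → f x = f y) := by
  have hkn : k < n := by omega
  have determines : ∀ x y : Fin n → Bool, wt x ≤ wt y →
      (∀ X ∈ 𝒳, andB X x = andB X y) → f x = f y := by
    intro x y hxy h
    by_cases hy : n - k ≤ wt y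
    · rw [eq_of_forall_andB_eq hkn hsep hxy hy h]
    · exact hconst x y (by omega) (by omega)
  refine ⟨fun x y hx hy h => ?_, fun x y h => ?_⟩
  · rcases le_total (wt x) (wt y) with hxy | hyx
    · exact eq_of_forall_andB_eq hkn hsep hxy hy h
    · exact (eq_of_forall_andB_eq hkn hsep hyx hx fun X hX => (h X hX).symm).symm
  · rcases le_total (wt x) (wt y) with hxy | hyx
    · exact determines x y hxy h
    · exact (determines y x hyx fun X hX => (h X hX).symm).symm
end

section
/- Let f : {0,1}^n → {0,1} and suppose {S_1,...,S_k} is an NAADT basis for f. Then the Möbius sparsity of f is at most 2^k, and the Möbius pattern complexity of f is at most 2^k. -/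
def IsUnionOf {α : Type*} (𝒮 : Finset (Finset α)) (S : Finset α) : Prop :=
  ∀ i ∈ S, ∃ B ∈ 𝒮, B ⊆ S ∧ i ∈ B

def boolIndicator {n : ℕ} (T : Finset (Fin n)) : Fin n → Bool := fun i => decide (i ∈ T)

lemma andR_boolIndicator {n : ℕ} (S T : Finset (Fin n)) :
    andR S (boolIndicator T) = if S ⊆ T then 1 else 0 := by
  simp [andR, boolIndicator, Finset.prod_boole, Finset.subset_iff]

lemma andB_boolIndicator {n : ℕ} (S T : Finset (Fin n)) :
    andB S (boolIndicator T) = decide (S ⊆ T) := by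
  simp [andB, boolIndicator, Finset.subset_iff]

lemma sum_mul_andR_boolIndicator {n : ℕ} (c : Finset (Fin n) → ℝ) (T : Finset (Fin n)) :
    ∑ S : Finset (Fin n), c S * andR S (boolIndicator T) = ∑ R ∈ T.powerset, c R := by
  simp [andR_boolIndicator, Finset.sum_ite, Finset.filter_subset_univ]

lemma Finset.eq_zero_of_forall_sum_powerset_eq_zero {α M : Type*} [AddCommMonoid M]
    {g : Finset α → M} {S : Finset α} (h : ∀ T ⊆ S, ∑ R ∈ T.powerset, g R = 0) : g S = 0 := by
  suffices ∀ T ⊆ S, g T = 0 from this S subset_rfl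
  intro T
  induction T using Finset.strongInduction with
  | H T ih =>
    intro hTS
    rw [← h T hTS, Finset.sum_eq_single_of_mem T (Finset.mem_powerset_self T)]
    intro R hR hRT
    exact ih R (ssubset_of_subset_of_ne (Finset.mem_powerset.1 hR) hRT)
      (hR |> Finset.mem_powerset.1 |>.trans hTS)

lemma isUnionOf_of_coeff_ne_zero {n : ℕ} {f : (Fin n → Bool) → Bool} {c : Finset (Fin n) → ℝ}
    (hf : ∀ x, (if f x then (1 : ℝ) else 0) = ∑ S : Finset (Fin n), c S * andR S x)
    {𝒮 : Finset (Finset (Fin n))}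
    (hbasis : ∀ x y : Fin n → Bool, (∀ S ∈ 𝒮, andB S x = andB S y) → f x = f y)
    {S : Finset (Fin n)} (hS : c S ≠ 0) : IsUnionOf 𝒮 S := by
  by_contra hunion
  obtain ⟨i, hiS, hi⟩ : ∃ i ∈ S, ∀ B ∈ 𝒮, B ⊆ S → i ∉ B := by
    simpa [IsUnionOf] using hunion
  have hF : ∀ T, (if f (boolIndicator T) then (1 : ℝ) else 0) = ∑ R ∈ T.powerset, c R :=
    fun T => (hf _).trans (sum_mul_andR_boolIndicator c T)
  refine hS ?_
  rw [← Finset.insert_erase hiS]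
  refine Finset.eq_zero_of_forall_sum_powerset_eq_zero (g := fun R => c (insert i R)) ?_
  intro T hT
  have hiT : i ∉ T := fun h => Finset.notMem_erase i S (hT h)
  have hTS : insert i T ⊆ S := Finset.insert_subset hiS (hT.trans (Finset.erase_subset i S))
  have hfT : f (boolIndicator (insert i T)) = f (boolIndicator T) := by
    refine hbasis _ _ fun B hB => ?_
    rw [andB_boolIndicator, andB_boolIndicator, decide_eq_decide]
    by_cases hiB : i ∈ B
    · exact iff_of_false (fun h => hi B hB (h.trans hTS) hiB) (fun h => hiT (h hiB))
    · exact Finset.subset_insert_iff_of_notMem hiB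
  have := hF (insert i T)
  rw [hfT, hF T, Finset.sum_powerset_insert hiT] at this
  linarith

lemma card_le_two_pow_of_forall_isUnionOf {α : Type*} [DecidableEq α]
    {𝒮 Sf : Finset (Finset α)} (h : ∀ S ∈ Sf, IsUnionOf 𝒮 S) : Sf.card ≤ 2 ^ 𝒮.card := by
  have hsub : ∀ {S S'}, S ∈ Sf → 𝒮.filter (· ⊆ S) = 𝒮.filter (· ⊆ S') → S ⊆ S' := by
    intro S S' hS heq i hi
    obtain ⟨B, hB, hBS, hiB⟩ := h S hS i hi
    have : B ∈ 𝒮.filter (· ⊆ S') := heq ▸ Finset.mem_filter.2 ⟨hB, hBS⟩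
    exact (Finset.mem_filter.1 this).2 hiB
  rw [← Finset.card_powerset]
  refine Finset.card_le_card_of_injOn (fun S => 𝒮.filter (· ⊆ S))
    (fun S _ => Finset.mem_powerset.2 (Finset.filter_subset _ _)) ?_
  exact fun S hS S' hS' heq => (hsub hS heq).antisymm (hsub hS' heq.symm)

lemma andB_eq_of_isUnionOf {n : ℕ} {𝒮 : Finset (Finset (Fin n))} {S : Finset (Fin n)}
    (h : IsUnionOf 𝒮 S) (x : Fin n → Bool) :
    andB S x = decide (∀ B ∈ 𝒮, B ⊆ S → andB B x = true) := by
  simp only [andB, decide_eq_true_eq, decide_eq_decide]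
  refine ⟨fun hS B _ hBS i hi => hS i (hBS hi), fun hall i hi => ?_⟩
  obtain ⟨B, hB, hBS, hiB⟩ := h i hi
  exact hall B hB hBS i hiB

lemma card_patterns_le_two_pow_of_forall_isUnionOf {n : ℕ} {𝒮 Sf : Finset (Finset (Fin n))}
    (h : ∀ S ∈ Sf, IsUnionOf 𝒮 S) :
    (Finset.univ.image
      (fun x : Fin n → Bool => fun S : {S // S ∈ Sf} => andB S.1 x)).card ≤ 2 ^ 𝒮.card := by
  let g : ({B // B ∈ 𝒮} → Bool) → {S // S ∈ Sf} → Bool :=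
    fun v S => decide (∀ B : {B // B ∈ 𝒮}, B.1 ⊆ S.1 → v B = true)
  have hfactor : ∀ x : Fin n → Bool,
      (fun S : {S // S ∈ Sf} => andB S.1 x) = g (fun B => andB B.1 x) := by
    intro x
    funext S
    simp [g, andB_eq_of_isUnionOf (h S.1 S.2)]
  calc _ ≤ (Finset.univ.image g).card :=
        Finset.card_le_card fun v hv => by
          obtain ⟨x, -, rfl⟩ := Finset.mem_image.1 hv
          exact Finset.mem_image.2 ⟨_, Finset.mem_univ _, (hfactor x).symm⟩
    _ ≤ (Finset.univ : Finset ({B // B ∈ 𝒮} → Bool)).card := Finset.card_image_le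
    _ = 2 ^ 𝒮.card := by simp

/-- If `𝒮` is an NAADT basis for `f` with `|𝒮| = k`, then the Möbius sparsity of `f` is
at most `2^k` and the Möbius pattern complexity of `f` is at most `2^k`. -/
theorem stmt19 (n : ℕ) (f : (Fin n → Bool) → Bool) (c : Finset (Fin n) → ℝ)
    (Sf : Finset (Finset (Fin n))) (hmem : ∀ S, S ∈ Sf ↔ c S ≠ 0)
    (hf : ∀ x, (if f x then (1 : ℝ) else 0) = ∑ S : Finset (Fin n), c S * andR S x)
    (𝒮 : Finset (Finset (Fin n))) (k : ℕ) (hcard : 𝒮.card = k)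
    (hbasis : ∀ x y : Fin n → Bool, (∀ S ∈ 𝒮, andB S x = andB S y) → f x = f y) :
    Sf.card ≤ 2 ^ k ∧
    (Finset.univ.image
      (fun x : Fin n → Bool => fun S : {S // S ∈ Sf} => andB S.1 x)).card ≤ 2 ^ k := by
  have hunion : ∀ S ∈ Sf, IsUnionOf 𝒮 S :=
    fun S hS => isUnionOf_of_coeff_ne_zero hf hbasis ((hmem S).1 hS)
  subst hcard
  exact ⟨card_le_two_pow_of_forall_isUnionOf hunion,
    card_patterns_le_two_pow_of_forall_isUnionOf hunion⟩
end
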